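/- arXiv:1003.0411 — 2 statements merged into one kernel-verified Lean document; each statement's English description precedes it below -/
import Mathlib

section
/- Let A be an element of GL(2,ℤ) of infinite order that has 1 or −1 as an eigenvalue, i.e. det(A − I) = 0 or det(A + I) = 0. Then there exist P ∈ GL(2,ℤ), a sign ε ∈ {1, −1}, and a nonzero integer n such that P·A·P⁻¹ = ε·[[1,n],[0,1]]. -/
/-!
An eigenvalue `ε = ±1` of `A` has a primitive integer eigenvector, which extends to a basis
of `ℤ²`; in that basis `A` becomes upper triangular, `[[ε, m], [0, c]]`, and `c = ±1` because
`det A = ±1`. If `c = -ε`, or if `m = 0`, then this matrix squares to `1`, contradicting infinite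
order. Hence `c = ε`, `m ≠ 0`, and `[[ε, m], [0, ε]] = ε • [[1, ε m], [0, 1]]`.
-/

open Matrix

theorem exists_isCoprime_mulVec_eq_zero {M : Matrix (Fin 2) (Fin 2) ℤ} (h : M.det = 0) :
    ∃ p q : ℤ, IsCoprime p q ∧ M *ᵥ ![p, q] = 0 := by
  obtain ⟨v, hv0, hv⟩ := exists_mulVec_eq_zero_iff.mpr h
  have hgcd : 0 < Int.gcd (v 0) (v 1) := by
    refine Int.gcd_pos_iff.mpr (not_and_or.mp fun h0 => hv0 ?_)
    ext i; fin_cases i <;> simp [h0.1, h0.2]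
  obtain ⟨g, p, q, hg, hpq, hp, hq⟩ := Int.exists_gcd_one' hgcd
  have hv_eq : v = (g : ℤ) • ![p, q] := by
    ext i; fin_cases i <;> simp [hp, hq, mul_comm]
  rw [hv_eq, mulVec_smul, smul_eq_zero] at hv
  exact ⟨p, q, Int.isCoprime_iff_gcd_eq_one.mpr hpq, hv.resolve_left (by positivity)⟩

theorem exists_conj_eq_upperTriangular {A : Matrix (Fin 2) (Fin 2) ℤ} {μ : ℤ}
    (h : (A - μ • 1).det = 0) :
    ∃ P : GL (Fin 2) ℤ, ∃ m c : ℤ,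
      (P : Matrix (Fin 2) (Fin 2) ℤ) * A * (P⁻¹ : GL (Fin 2) ℤ) = !![μ, m; 0, c] := by
  obtain ⟨p, q, ⟨s, t, hst⟩, hker⟩ := exists_isCoprime_mulVec_eq_zero h
  have hdet : (!![p, -t; q, s]).det = 1 := by rw [det_fin_two_of]; linear_combination hst
  have hinv : !![s, t; -q, p] * !![p, -t; q, s] = 1 := by
    simpa [adjugate_fin_two_of, hdet] using adjugate_mul !![p, -t; q, s]
  -- `P⁻¹` has the eigenvector `(p, q)` as its first column.
  let P : GL (Fin 2) ℤ := ⟨_, _, hinv, mul_eq_one_comm.mp hinv⟩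
  let C := (P : Matrix (Fin 2) (Fin 2) ℤ) * A * (P⁻¹ : GL (Fin 2) ℤ)
  obtain ⟨a, b, c, d, rfl⟩ : ∃ a b c d, A = !![a, b; c, d] := ⟨_, _, _, _, eta_fin_two A⟩
  rw [one_fin_two, smul_of, of_sub_of] at hker
  have hker0 : p * (a - μ) + q * b = 0 := by simpa using congrFun hker 0
  have hker1 : p * c + q * (d - μ) = 0 := by simpa using congrFun hker 1
  have hC : C = !![s, t; -q, p] * !![a, b; c, d] * !![p, -t; q, s] := rfl
  simp only [mul_fin_two] at hC
  have hC00 : C 0 0 = μ := by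
    rw [hC]; dsimp only [of_apply, cons_val_zero, cons_val_one]
    linear_combination s * hker0 + t * hker1 + μ * hst
  have hC10 : C 1 0 = 0 := by
    rw [hC]; dsimp only [of_apply, cons_val_zero, cons_val_one]
    linear_combination p * hker1 - q * hker0
  exact ⟨P, C 0 1, C 1 1, (eta_fin_two C).trans (by rw [hC00, hC10])⟩

theorem diag_eq_and_ne_zero_of_not_isOfFinOrder {T : GL (Fin 2) ℤ} {ε m c : ℤ}
    (hε : ε = 1 ∨ ε = -1) (hT : (T : Matrix (Fin 2) (Fin 2) ℤ) = !![ε, m; 0, c])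
    (hT_inf : ¬ IsOfFinOrder T) : c = ε ∧ m ≠ 0 := by
  by_contra hne
  have hc : c = 1 ∨ c = -1 := by
    have hdet := isUnits_det_units T
    rw [hT, det_fin_two_of, mul_zero, sub_zero] at hdet
    exact Int.isUnit_iff.mp (isUnit_of_mul_isUnit_right hdet)
  refine hT_inf (isOfFinOrder_iff_pow_eq_one.mpr ⟨2, two_pos, Units.ext ?_⟩)
  rw [Units.val_pow_eq_pow_val, hT, Units.val_one, sq, mul_fin_two, one_fin_two]
  rcases hε with rfl | rfl <;> rcases hc with rfl | rfl <;> simp_all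

/-- An infinite-order element of `GL(2, ℤ)` with eigenvalue `1` or `-1` (a reducible
toral automorphism) is conjugate in `GL(2, ℤ)` to `±[[1, n], [0, 1]]` for some
nonzero integer `n`. -/
theorem reducible_toral_normal_form (A : GL (Fin 2) ℤ)
    (hinf : ¬ IsOfFinOrder A)
    (heig : Matrix.det ((A : Matrix (Fin 2) (Fin 2) ℤ) - 1) = 0 ∨
            Matrix.det ((A : Matrix (Fin 2) (Fin 2) ℤ) + 1) = 0) :
    ∃ P : GL (Fin 2) ℤ, ∃ ε : ℤ, (ε = 1 ∨ ε = -1) ∧ ∃ n : ℤ, n ≠ 0 ∧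
      ((P * A * P⁻¹ : GL (Fin 2) ℤ) : Matrix (Fin 2) (Fin 2) ℤ) = ε • !![1, n; 0, 1] := by
  obtain ⟨ε, hε, hdet⟩ : ∃ ε : ℤ, (ε = 1 ∨ ε = -1) ∧
      ((A : Matrix (Fin 2) (Fin 2) ℤ) - ε • 1).det = 0 := by
    rcases heig with h | h
    · exact ⟨1, .inl rfl, by rwa [one_smul]⟩
    · exact ⟨-1, .inr rfl, by rwa [neg_smul, one_smul, sub_neg_eq_add]⟩
  obtain ⟨P, m, c, hT⟩ := exists_conj_eq_upperTriangular hdet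
  rw [← Units.val_mul, ← Units.val_mul] at hT
  have hT_inf : ¬ IsOfFinOrder (P * A * P⁻¹) :=
    fun h => hinf ((isConj_iff.mpr ⟨P, rfl⟩).symm.isOfFinOrder h)
  obtain ⟨hc, hm⟩ := diag_eq_and_ne_zero_of_not_isOfFinOrder hε hT hT_inf
  have hεε : ε * ε = 1 := by rcases hε with rfl | rfl <;> norm_num
  refine ⟨P, ε, hε, ε * m, mul_ne_zero (by rintro rfl; norm_num at hεε) hm, ?_⟩
  rw [hT, hc, smul_of]
  ext i j; fin_cases i <;> fin_cases j <;> simp [← mul_assoc, hεε]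
end

section
/- Let A and B be 2×2 integer matrices with det A = det B = 1, tr A > 2 and tr B > 2, and let λ(A) = (tr A + √((tr A)² − 4))/2 and λ(B) = (tr B + √((tr B)² − 4))/2. If there exist positive integers k₁, k₂ with λ(A)^{k₁} = λ(B)^{k₂}, then A^{k₁} and B^{k₂} have equal characteristic polynomials, and there exists an invertible 2×2 rational matrix P such that P·A^{k₁}·P⁻¹ = B^{k₂} (as matrices over ℚ). -/
/-!
Write `λ` for the dilatation of `A`. Since `λ + λ⁻¹ = tr A` and `λ λ⁻¹ = det A = 1`, Newton's
recurrence from Cayley–Hamilton gives `tr (A ^ n) = λ ^ n + λ ^ (-n)`. Hence `λ(A) ^ k₁ = λ(B) ^ k₂`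
forces `A ^ k₁` and `B ^ k₂` to have equal traces, and, both having determinant `1`, equal
characteristic polynomials. This trace exceeds `2`, so the common characteristic polynomial has
nonzero discriminant; a non-scalar `2 × 2` matrix over a field is similar to the companion matrix
of its characteristic polynomial (take a cyclic vector), so the two powers are similar over `ℚ`.
-/

open Matrix

namespace Matrix

variable {R : Type*} [CommRing R]

theorem sq_eq_trace_smul_sub_det_smul (M : Matrix (Fin 2) (Fin 2) R) :
    M ^ 2 = M.trace • M - M.det • 1 := by
  ext i j
  fin_cases i <;> fin_cases j <;> simp [sq, mul_apply, trace_fin_two, det_fin_two] <;> ring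

theorem trace_pow_eq_pow_add_pow (M : Matrix (Fin 2) (Fin 2) R) {μ ν : R}
    (htr : M.trace = μ + ν) (hdet : M.det = μ * ν) (n : ℕ) :
    (M ^ n).trace = μ ^ n + ν ^ n := by
  induction n using Nat.twoStepInduction with
  | zero => norm_num [trace_fin_two]
  | one => simpa using htr
  | more n ih₀ ih₁ =>
    have hrec : M ^ (n + 2) = M.trace • M ^ (n + 1) - M.det • M ^ n := by
      rw [pow_add, sq_eq_trace_smul_sub_det_smul, mul_sub, Matrix.mul_smul, Matrix.mul_smul,
        mul_one, ← pow_succ]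
    rw [hrec, trace_sub, trace_smul, trace_smul, ih₀, ih₁, htr, hdet, smul_eq_mul, smul_eq_mul]
    ring

theorem discr_map_fin_two {S : Type*} [CommRing S] (f : R →+* S)
    (M : Matrix (Fin 2) (Fin 2) R) : (M.map f).discr = f M.discr := by
  simp [discr_fin_two, ← AddMonoidHom.map_trace, RingHom.map_det, map_ofNat]

def krylov (M : Matrix (Fin 2) (Fin 2) R) (v : Fin 2 → R) : Matrix (Fin 2) (Fin 2) R :=
  (of ![v, M *ᵥ v])ᵀ

theorem mul_krylov (M : Matrix (Fin 2) (Fin 2) R) (v : Fin 2 → R) :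
    M * M.krylov v = M.krylov v * !![0, -M.det; 1, M.trace] := by
  ext i j
  fin_cases i <;> fin_cases j <;>
    simp [krylov, mul_apply, Fin.sum_univ_two, trace_fin_two, det_fin_two] <;> ring

/-- If none of `e₀`, `e₁`, `e₀ + e₁` is cyclic, all three are eigenvectors, so `M` is scalar. -/
theorem exists_det_krylov_ne_zero {K : Type*} [Field K] (M : Matrix (Fin 2) (Fin 2) K)
    (hM : M.discr ≠ 0) : ∃ v : Fin 2 → K, (M.krylov v).det ≠ 0 := by
  by_contra! h
  have h₀ := h ![1, 0]
  have h₁ := h ![0, 1]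
  have h₂ := h ![1, 1]
  simp [krylov, det_fin_two] at h₀ h₁ h₂
  simp [h₀, h₁] at h₂
  apply hM
  rw [discr_fin_two, trace_fin_two, det_fin_two, h₀, h₁]
  linear_combination (M 1 1 - M 0 0) * h₂

theorem exists_conj_of_charpoly_eq_of_discr_ne_zero {K : Type*} [Field K]
    {M N : Matrix (Fin 2) (Fin 2) K} (hcp : M.charpoly = N.charpoly) (hM : M.discr ≠ 0) :
    ∃ P : Matrix (Fin 2) (Fin 2) K, IsUnit P ∧ P * M * P⁻¹ = N := by
  have htr : M.trace = N.trace := by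
    rw [trace_eq_neg_charpoly_coeff, trace_eq_neg_charpoly_coeff, hcp]
  have hdet : M.det = N.det := by
    rw [det_eq_sign_charpoly_coeff, det_eq_sign_charpoly_coeff, hcp]
  have hN : N.discr ≠ 0 := by rwa [discr_fin_two, ← htr, ← hdet, ← discr_fin_two]
  obtain ⟨v, hv⟩ := exists_det_krylov_ne_zero M hM
  obtain ⟨w, hw⟩ := exists_det_krylov_ne_zero N hN
  set S := M.krylov v
  set T := N.krylov w
  have hMS : M * S = S * !![0, -N.det; 1, N.trace] := htr ▸ hdet ▸ mul_krylov M v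
  have hNT : N * T = T * !![0, -N.det; 1, N.trace] := mul_krylov N w
  refine ⟨T * S⁻¹, (isUnit_iff_isUnit_det _).2 ?_, ?_⟩
  · rw [det_mul]
    exact hw.isUnit.mul (isUnit_nonsing_inv_det _ hv.isUnit)
  calc T * S⁻¹ * M * (T * S⁻¹)⁻¹ = T * (S⁻¹ * (M * S)) * T⁻¹ := by
        rw [mul_inv_rev, nonsing_inv_nonsing_inv _ hv.isUnit]
        simp only [Matrix.mul_assoc]
    _ = N := by
        rw [hMS, nonsing_inv_mul_cancel_left _ _ hv.isUnit, ← hNT,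
          mul_nonsing_inv_cancel_right _ _ hw.isUnit]

end Matrix

noncomputable def dilatation (t : ℝ) : ℝ := (t + √(t ^ 2 - 4)) / 2

theorem dilatation_mul_sub_self {t : ℝ} (ht : 4 ≤ t ^ 2) :
    dilatation t * (t - dilatation t) = 1 := by
  have hs := Real.sq_sqrt (sub_nonneg.2 ht)
  unfold dilatation
  linear_combination -hs / 4

theorem inv_dilatation {t : ℝ} (ht : 4 ≤ t ^ 2) : (dilatation t)⁻¹ = t - dilatation t :=
  inv_eq_of_mul_eq_one_right (dilatation_mul_sub_self ht)

theorem one_lt_dilatation {t : ℝ} (ht : 2 < t) : 1 < dilatation t := by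
  have := Real.sqrt_nonneg (t ^ 2 - 4)
  unfold dilatation
  linarith

theorem two_lt_add_inv_self {K : Type*} [Field K] [LinearOrder K] [IsStrictOrderedRing K]
    {x : K} (hx : 1 < x) : 2 < x + x⁻¹ := by
  have hx₀ : 0 < x := by linarith
  have hsq : x + x⁻¹ - 2 = (x - 1) ^ 2 / x := by field_simp; ring
  have hpos : 0 < (x - 1) ^ 2 / x := by positivity
  linarith

theorem Matrix.trace_pow_eq_dilatation_pow_add_inv (A : Matrix (Fin 2) (Fin 2) ℤ)
    (hdA : A.det = 1) (htA : 4 ≤ A.trace ^ 2) (n : ℕ) :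
    ((A ^ n).trace : ℝ) = dilatation A.trace ^ n + (dilatation A.trace ^ n)⁻¹ := by
  have ht : (4 : ℝ) ≤ (A.trace : ℝ) ^ 2 := by exact_mod_cast htA
  have key := (A.map (Int.castRingHom ℝ)).trace_pow_eq_pow_add_pow
    (μ := dilatation A.trace) (ν := A.trace - dilatation A.trace) ?_ ?_ n
  · rw [← A.map_pow, ← AddMonoidHom.map_trace, ← inv_dilatation ht, inv_pow] at key
    simpa using key
  · rw [← AddMonoidHom.map_trace]
    simp
  · rw [← RingHom.mapMatrix_apply, ← RingHom.map_det, hdA, map_one, dilatation_mul_sub_self ht]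

theorem anosov_equal_dilatation_powers_conjugate_general (A B : Matrix (Fin 2) (Fin 2) ℤ)
    (hdA : A.det = 1) (hdB : B.det = 1) (htA : 2 < A.trace) (htB : 2 < B.trace)
    (lamA lamB : ℝ)
    (hlamA : lamA = ((A.trace : ℝ) + Real.sqrt ((A.trace : ℝ) ^ 2 - 4)) / 2)
    (hlamB : lamB = ((B.trace : ℝ) + Real.sqrt ((B.trace : ℝ) ^ 2 - 4)) / 2)
    (k₁ k₂ : ℕ) (hk₁ : 0 < k₁)
    (hlam : lamA ^ k₁ = lamB ^ k₂) :
    (A ^ k₁).charpoly = (B ^ k₂).charpoly ∧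
    ∃ P : Matrix (Fin 2) (Fin 2) ℚ, IsUnit P ∧
      P * (A.map (Int.cast : ℤ → ℚ)) ^ k₁ * P⁻¹ = (B.map (Int.cast : ℤ → ℚ)) ^ k₂ := by
  obtain rfl : lamA = dilatation A.trace := hlamA
  obtain rfl : lamB = dilatation B.trace := hlamB
  have htrA := A.trace_pow_eq_dilatation_pow_add_inv hdA (by nlinarith) k₁
  have htrB := B.trace_pow_eq_dilatation_pow_add_inv hdB (by nlinarith) k₂
  have htr : (A ^ k₁).trace = (B ^ k₂).trace := by
    rw [← hlam, ← htrA] at htrB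
    exact_mod_cast htrB.symm
  have hgt : 2 < (A ^ k₁).trace := by
    have hpow := one_lt_pow₀ (one_lt_dilatation (t := A.trace) (by exact_mod_cast htA)) hk₁.ne'
    have := two_lt_add_inv_self hpow
    rw [← htrA] at this
    exact_mod_cast this
  have hcp : (A ^ k₁).charpoly = (B ^ k₂).charpoly := by
    rw [charpoly_fin_two, charpoly_fin_two, htr, det_pow, det_pow, hdA, hdB, one_pow, one_pow]
  refine ⟨hcp, ?_⟩
  have hmap (M : Matrix (Fin 2) (Fin 2) ℤ) (k : ℕ) :
      M.map (Int.cast : ℤ → ℚ) ^ k = (M ^ k).map (Int.castRingHom ℚ) :=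
    (M.map_pow (Int.castRingHom ℚ) k).symm
  rw [hmap, hmap]
  refine exists_conj_of_charpoly_eq_of_discr_ne_zero (by rw [charpoly_map, charpoly_map, hcp]) ?_
  rw [discr_map_fin_two, map_ne_zero_iff _ (Int.castRingHom ℚ).injective_int, discr_fin_two,
    det_pow, hdA, one_pow]
  nlinarith

/-- If two Anosov matrices `A, B` (integer matrices with determinant `1` and trace
`> 2`) have dilatations satisfying `λ(A)^{k₁} = λ(B)^{k₂}` for some positive
integers `k₁, k₂`, then `A^{k₁}` and `B^{k₂}` have equal characteristic
polynomials and are conjugate by an invertible rational matrix. -/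
theorem anosov_equal_dilatation_powers_conjugate (A B : Matrix (Fin 2) (Fin 2) ℤ)
    (hdA : A.det = 1) (hdB : B.det = 1) (htA : 2 < A.trace) (htB : 2 < B.trace)
    (lamA lamB : ℝ)
    (hlamA : lamA = ((A.trace : ℝ) + Real.sqrt ((A.trace : ℝ) ^ 2 - 4)) / 2)
    (hlamB : lamB = ((B.trace : ℝ) + Real.sqrt ((B.trace : ℝ) ^ 2 - 4)) / 2)
    (k₁ k₂ : ℕ) (hk₁ : 0 < k₁) (hk₂ : 0 < k₂)
    (hlam : lamA ^ k₁ = lamB ^ k₂) :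
    (A ^ k₁).charpoly = (B ^ k₂).charpoly ∧
    ∃ P : Matrix (Fin 2) (Fin 2) ℚ, IsUnit P ∧
      P * (A.map (Int.cast : ℤ → ℚ)) ^ k₁ * P⁻¹ = (B.map (Int.cast : ℤ → ℚ)) ^ k₂ :=
  anosov_equal_dilatation_powers_conjugate_general A B hdA hdB htA htB lamA lamB hlamA hlamB k₁ k₂
    hk₁ hlam
end
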